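/- Let λ = (λ₁, λ₂) be a partition with λ₁ ≥ λ₂ ≥ 0, and define Q_{(r,s)}(x,x) = q_r(x,x) q_s(x,x) + 2 Σ_{i=1}^{s} (−1)^i q_{r+i}(x,x) q_{s−i}(x,x) for (r,s) ≠ (0,0). For σ₁, σ₂ in the symmetric group S₂, let B(λ; σ₁, σ₂) be the set of pairs ((u₁,u₂),(v₁,v₂)) of pairs of non-negative integers with u₁+u₂+v₁+v₂ = λ₁+λ₂+2 and u_{σ₁(2)} + v_{σ₂(2)} ≤ λ₂. Then Q_{(2λ₁+4, 2λ₂+2)}(x,x) = 4 Σ_{σ₁,σ₂ ∈ S₂} sgn(σ₁) sgn(σ₂) Σ_{(u,v) ∈ B(λ;σ₁,σ₂)} q_{2u₁}(x) q_{2u₂+1}(x) q_{2v₁}(x) q_{2v₂+1}(x). -/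

import Mathlib

/-!
Write `q(t) = E(s) + t O(s)` with `s = t²`. Since `q(t) q(-t) = 1`, comparing even parts gives
`E² = 1 + s O²`, so `q(t)² = 1 + 2 s O(s)² + 2 t E(s) O(s)`: the coefficients `q_{2m+2}(x,x)`
and `q_{2m+1}(x,x)` are `2 [s^m] O²` and `2 [s^m] E O`. Grouping `u_{σ₁(2)}` with `v_{σ₂(2)}`
(total `k ≤ λ₂`) and the other two coordinates (total `λ₁ + λ₂ + 2 - k`), each sum over
`B(λ; σ₁, σ₂)` factors as `∑ₖ [s^k] (·)(·) · [s^{λ₁+λ₂+2-k}] (·)(·)` with factors `E` and `O`.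
Both sides then change by the same amount when `(λ₁, λ₂)` becomes `(λ₁ + 1, λ₂ - 1)`, by the
recursion `Q_{(r,s+2)} = q_r q_{s+2} - 2 q_{r+1} q_{s+1} + q_{r+2} q_s + Q_{(r+2,s)}`, which
gives an induction on `λ₂`.
-/

open Finset

/-- The entry of a pair indexed by `Fin 2` (`0 ↦` first, `1 ↦` second entry). -/
def pget (p : ℕ × ℕ) (i : Fin 2) : ℕ := if i = 0 then p.1 else p.2

/-- `B(λ; σ₁, σ₂)`: the set of pairs `(u, v)` of pairs of non-negative integers with
`u₁ + u₂ + v₁ + v₂ = λ₁ + λ₂ + 2` and `u_{σ₁(2)} + v_{σ₂(2)} ≤ λ₂`. -/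
def Bset (l1 l2 : ℕ) (s1 s2 : Equiv.Perm (Fin 2)) : Finset ((ℕ × ℕ) × (ℕ × ℕ)) :=
  ((Finset.range (l1 + l2 + 3) ×ˢ Finset.range (l1 + l2 + 3)) ×ˢ
      (Finset.range (l1 + l2 + 3) ×ˢ Finset.range (l1 + l2 + 3))).filter
    fun p => p.1.1 + p.1.2 + p.2.1 + p.2.2 = l1 + l2 + 2 ∧
      pget p.1 (s1 1) + pget p.2 (s2 1) ≤ l2

open PowerSeries

namespace PowerSeries

variable {R : Type*} [CommRing R]

noncomputable def evenPart (f : R⟦X⟧) : R⟦X⟧ := mk fun k => coeff (2 * k) f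

noncomputable def oddPart (f : R⟦X⟧) : R⟦X⟧ := mk fun k => coeff (2 * k + 1) f

@[simp]
theorem coeff_evenPart (f : R⟦X⟧) (k : ℕ) : coeff k (evenPart f) = coeff (2 * k) f :=
  coeff_mk _ _

@[simp]
theorem coeff_oddPart (f : R⟦X⟧) (k : ℕ) : coeff k (oddPart f) = coeff (2 * k + 1) f :=
  coeff_mk _ _

theorem evenPart_expand_add_X_mul_expand (f g : R⟦X⟧) :
    evenPart (expand 2 two_ne_zero f + X * expand 2 two_ne_zero g) = f := by
  ext (_ | k)
  · simp
  · rw [coeff_evenPart, map_add, coeff_expand_mul, show 2 * (k + 1) = 2 * k + 1 + 1 by ring,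
      coeff_succ_X_mul, coeff_expand_of_not_dvd _ _ _ (by omega), add_zero]

theorem oddPart_expand_add_X_mul_expand (f g : R⟦X⟧) :
    oddPart (expand 2 two_ne_zero f + X * expand 2 two_ne_zero g) = g := by
  ext k
  rw [coeff_oddPart, map_add, coeff_succ_X_mul, coeff_expand_mul,
    coeff_expand_of_not_dvd _ _ _ (by omega), zero_add]

theorem expand_evenPart_add_X_mul_expand_oddPart (f : R⟦X⟧) :
    expand 2 two_ne_zero (evenPart f) + X * expand 2 two_ne_zero (oddPart f) = f := by
  ext n
  obtain ⟨k, rfl | rfl⟩ := Nat.even_or_odd' n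
  · rw [← coeff_evenPart, evenPart_expand_add_X_mul_expand, coeff_evenPart]
  · rw [← coeff_oddPart, oddPart_expand_add_X_mul_expand, coeff_oddPart]

theorem mul_eq_expand_add_X_mul_expand (f g : R⟦X⟧) :
    f * g = expand 2 two_ne_zero (evenPart f * evenPart g + X * (oddPart f * oddPart g)) +
      X * expand 2 two_ne_zero (evenPart f * oddPart g + oddPart f * evenPart g) := by
  conv_lhs => rw [← expand_evenPart_add_X_mul_expand_oddPart f,
    ← expand_evenPart_add_X_mul_expand_oddPart g]
  simp only [map_add, map_mul, expand_X]
  ring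

theorem evenPart_mul (f g : R⟦X⟧) :
    evenPart (f * g) = evenPart f * evenPart g + X * (oddPart f * oddPart g) := by
  rw [mul_eq_expand_add_X_mul_expand, evenPart_expand_add_X_mul_expand]

theorem oddPart_mul (f g : R⟦X⟧) :
    oddPart (f * g) = evenPart f * oddPart g + oddPart f * evenPart g := by
  rw [mul_eq_expand_add_X_mul_expand, oddPart_expand_add_X_mul_expand]

@[simp]
theorem evenPart_one : evenPart (1 : R⟦X⟧) = 1 := by
  ext k
  simp [coeff_one]

theorem evenPart_rescale_neg_one (f : R⟦X⟧) : evenPart (rescale (-1) f) = evenPart f := by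
  ext k
  simp [coeff_rescale, pow_mul]

theorem oddPart_rescale_neg_one (f : R⟦X⟧) : oddPart (rescale (-1) f) = -oddPart f := by
  ext k
  simp [coeff_rescale, pow_succ, pow_mul]

theorem rescale_neg_one_one_sub_C_mul_X (a : R) :
    rescale (-1) (1 - C a * X) = 1 + C a * X := by
  ext (_ | _ | n) <;> simp [coeff_rescale, coeff_one, pow_succ]

theorem mul_rescale_neg_one_self_eq_one {f D : R⟦X⟧} (hD : IsUnit D)
    (h : f * D = rescale (-1) D) : f * rescale (-1) f = 1 := by
  have h' : rescale (-1) f * rescale (-1) D = D := by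
    rw [← map_mul, h, rescale_rescale, neg_one_mul, neg_neg, rescale_one, RingHom.id_apply]
  have hunit : IsUnit (D * rescale (-1) D) := hD.mul (hD.map _)
  refine (hunit.mul_left_inj).1 ?_
  calc f * rescale (-1) f * (D * rescale (-1) D)
      = (f * D) * (rescale (-1) f * rescale (-1) D) := by ring
    _ = 1 * (D * rescale (-1) D) := by rw [h, h', one_mul, mul_comm]

theorem evenPart_mul_self_of_mul_rescale_neg_one_self_eq_one {f : R⟦X⟧}
    (hf : f * rescale (-1) f = 1) :
    evenPart f * evenPart f = 1 + X * (oddPart f * oddPart f) := by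
  have h := congrArg evenPart hf
  rw [evenPart_mul, evenPart_rescale_neg_one, oddPart_rescale_neg_one, evenPart_one] at h
  linear_combination h

end PowerSeries

theorem Finset.sum_Icc_one_eq_sum_range {M : Type*} [AddCommMonoid M] (f : ℕ → M) (n : ℕ) :
    ∑ i ∈ Icc 1 n, f i = ∑ i ∈ range n, f (i + 1) := by
  rw [← Ico_add_one_right_eq_Icc, sum_Ico_eq_sum_range, add_tsub_cancel_right]
  simp_rw [add_comm 1]

theorem Equiv.Perm.univ_fin_two :
    (univ : Finset (Equiv.Perm (Fin 2))) = {1, Equiv.swap 0 1} := by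
  decide

theorem Equiv.Perm.eq_one_or_eq_swap_zero_one (s : Equiv.Perm (Fin 2)) :
    s = 1 ∨ s = Equiv.swap 0 1 := by
  simpa [univ_fin_two] using mem_univ s

section TwoRow

variable {R : Type*} [CommRing R]

/-- `Q_{(r,s)}(x,x)` when `c m = q_m(x,x)`. -/
def twoRowQ (c : ℕ → R) (r s : ℕ) : R :=
  c r * c s + 2 * ∑ i ∈ Icc 1 s, (-1) ^ i * c (r + i) * c (s - i)

theorem twoRowQ_zero (c : ℕ → R) (r : ℕ) : twoRowQ c r 0 = c r * c 0 := by
  simp [twoRowQ]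

theorem twoRowQ_add_two (c : ℕ → R) (r s : ℕ) :
    twoRowQ c r (s + 2) = c r * c (s + 2) - 2 * c (r + 1) * c (s + 1) + c (r + 2) * c s +
      twoRowQ c (r + 2) s := by
  rw [twoRowQ, twoRowQ, sum_Icc_one_eq_sum_range, sum_Icc_one_eq_sum_range, sum_range_succ',
    sum_range_succ']
  have htail : ∑ k ∈ range s, (-1 : R) ^ (k + 1 + 1 + 1) * c (r + (k + 1 + 1 + 1)) *
      c (s + 2 - (k + 1 + 1 + 1)) =
      ∑ k ∈ range s, (-1) ^ (k + 1) * c (r + 2 + (k + 1)) * c (s - (k + 1)) := by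
    refine sum_congr rfl fun k _ => ?_
    rw [show s + 2 - (k + 1 + 1 + 1) = s - (k + 1) by omega,
      show r + (k + 1 + 1 + 1) = r + 2 + (k + 1) by ring]
    ring
  rw [htail, show s + 2 - (0 + 1) = s + 1 by omega, show s + 2 - (0 + 1 + 1) = s by omega]
  ring

theorem twoRowQ_even_eq_sum (E O : R⟦X⟧) (hEO : E * E = 1 + X * (O * O)) (c : ℕ → R)
    (hc_even : ∀ m, c (2 * m) = coeff m (E * E + X * (O * O)))
    (hc_odd : ∀ m, c (2 * m + 1) = coeff m (E * O + O * E)) (a b : ℕ) :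
    twoRowQ c (2 * a + 4) (2 * b + 2) = 4 * ∑ k ∈ range (b + 1),
      (coeff k (O * O) * coeff (a + b + 2 - k) (E * E)
        - coeff k (E * O) * coeff (a + b + 2 - k) (O * E)
        - coeff k (O * E) * coeff (a + b + 2 - k) (E * O)
        + coeff k (E * E) * coeff (a + b + 2 - k) (O * O)) := by
  have hEE_zero : coeff 0 (E * E) = 1 := by simp [hEO]
  have hEE_succ (m : ℕ) : coeff (m + 1) (E * E) = coeff m (O * O) := by
    simp [hEO, coeff_one, coeff_succ_X_mul]
  have hc_zero : c 0 = 1 := by simpa [hEO] using hc_even 0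
  have hc_even_succ (m : ℕ) : c (2 * m + 2) = 2 * coeff m (O * O) := by
    rw [show 2 * m + 2 = 2 * (m + 1) by ring, hc_even, map_add, coeff_succ_X_mul, hEE_succ,
      two_mul]
  have hc_odd_eq (m : ℕ) : c (2 * m + 1) = 2 * coeff m (E * O) := by
    rw [hc_odd, mul_comm O E, map_add, two_mul]
  simp_rw [mul_comm O E]
  induction b generalizing a with
  | zero =>
    rw [twoRowQ_add_two, twoRowQ_zero, sum_range_one, show 2 * a + 4 = 2 * (a + 1) + 2 by ring,
      show 2 * (a + 1) + 2 + 1 = 2 * (a + 2) + 1 by ring,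
      show 2 * (a + 1) + 2 + 2 = 2 * (a + 2) + 2 by ring, show a + 0 + 2 - 0 = a + 1 + 1 by omega]
    simp only [hc_even_succ, hc_odd_eq, hc_zero, hEE_succ, hEE_zero]
    ring
  | succ b ih =>
    -- `(a, b + 1) ↦ (a + 1, b)` keeps `a + b` fixed and drops the term `k = b + 1`
    rw [show 2 * (b + 1) + 2 = 2 * b + 2 + 2 by ring, twoRowQ_add_two,
      show 2 * a + 4 + 2 = 2 * (a + 1) + 4 by ring, ih, sum_range_succ _ (b + 1),
      show a + (b + 1) + 2 = a + 1 + b + 2 by ring,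
      show a + 1 + b + 2 - (b + 1) = a + 1 + 1 by omega,
      show 2 * a + 4 = 2 * (a + 1) + 2 by ring, show 2 * b + 2 + 2 = 2 * (b + 1) + 2 by ring,
      show 2 * (a + 1) + 2 + 1 = 2 * (a + 2) + 1 by ring,
      show 2 * b + 2 + 1 = 2 * (b + 1) + 1 by ring,
      show 2 * (a + 1) + 4 = 2 * (a + 2) + 2 by ring]
    simp only [hc_even_succ, hc_odd_eq, hEE_succ]
    ring

theorem sum_Bset (A B : Fin 2 → R⟦X⟧) (l1 l2 : ℕ) (s1 s2 : Equiv.Perm (Fin 2)) :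
    ∑ p ∈ Bset l1 l2 s1 s2,
        coeff p.1.1 (A 0) * coeff p.1.2 (A 1) * coeff p.2.1 (B 0) * coeff p.2.2 (B 1) =
      ∑ k ∈ range (l2 + 1),
        coeff k (A (s1 1) * B (s2 1)) * coeff (l1 + l2 + 2 - k) (A (s1 0) * B (s2 0)) := by
  simp_rw [coeff_mul, sum_mul_sum, ← sum_product']
  rw [sum_sigma']
  let join (s : Equiv.Perm (Fin 2)) (a c : ℕ) : ℕ × ℕ := if s = 1 then (c, a) else (a, c)
  refine sum_nbij'
    (fun p => ⟨pget p.1 (s1 1) + pget p.2 (s2 1), (pget p.1 (s1 1), pget p.2 (s2 1)),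
      (pget p.1 (s1 0), pget p.2 (s2 0))⟩)
    (fun x => (join s1 x.2.1.1 x.2.2.1, join s2 x.2.1.2 x.2.2.2)) ?_ ?_ ?_ ?_ ?_ <;>
  rcases s1.eq_one_or_eq_swap_zero_one with rfl | rfl <;>
  rcases s2.eq_one_or_eq_swap_zero_one with rfl | rfl <;>
  simp [Bset, pget, join]
  all_goals first
    | (intros; omega)
    | (rintro ⟨k, ⟨a, b⟩, c, d⟩ - (rfl : a + b = k) -; rfl)
    | (intros; ring)

theorem sum_sign_mul_sum_Bset (A B : Fin 2 → R⟦X⟧) (l1 l2 : ℕ) :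
    ∑ s : Equiv.Perm (Fin 2) × Equiv.Perm (Fin 2),
        ((Equiv.Perm.sign s.1 * Equiv.Perm.sign s.2 : ℤ) : R) *
          ∑ p ∈ Bset l1 l2 s.1 s.2,
            coeff p.1.1 (A 0) * coeff p.1.2 (A 1) * coeff p.2.1 (B 0) * coeff p.2.2 (B 1) =
      ∑ k ∈ range (l2 + 1),
        (coeff k (A 1 * B 1) * coeff (l1 + l2 + 2 - k) (A 0 * B 0)
          - coeff k (A 0 * B 1) * coeff (l1 + l2 + 2 - k) (A 1 * B 0)
          - coeff k (A 1 * B 0) * coeff (l1 + l2 + 2 - k) (A 0 * B 1)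
          + coeff k (A 0 * B 0) * coeff (l1 + l2 + 2 - k) (A 1 * B 1)) := by
  have h1 : (1 : Equiv.Perm (Fin 2)) ≠ Equiv.swap 0 1 := by decide
  simp only [sum_Bset, Fintype.sum_prod_type, Equiv.Perm.univ_fin_two, sum_pair h1]
  simp [sum_add_distrib, sum_sub_distrib, Equiv.swap_apply_left, Equiv.swap_apply_right]
  ring

end TwoRow

theorem Q_two_row_even_expression_general (n : ℕ)
    (q : ℤ → MvPolynomial (Fin n) ℚ) (qq : ℕ → MvPolynomial (Fin n) ℚ)
    (hq : (PowerSeries.mk fun r : ℕ => q r) *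
        ∏ i : Fin n, (1 - PowerSeries.C (MvPolynomial.X i : MvPolynomial (Fin n) ℚ) *
          PowerSeries.X)
      = ∏ i : Fin n, (1 + PowerSeries.C (MvPolynomial.X i : MvPolynomial (Fin n) ℚ) *
          PowerSeries.X))
    (hqq : (PowerSeries.mk fun r => qq r) *
        (∏ i : Fin n, (1 - PowerSeries.C (MvPolynomial.X i : MvPolynomial (Fin n) ℚ) *
          PowerSeries.X)) ^ 2
      = (∏ i : Fin n, (1 + PowerSeries.C (MvPolynomial.X i : MvPolynomial (Fin n) ℚ) *
          PowerSeries.X)) ^ 2)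
    (l1 l2 : ℕ) :
    qq (2 * l1 + 4) * qq (2 * l2 + 2) +
        2 * ∑ i ∈ Finset.Icc 1 (2 * l2 + 2),
          (-1 : MvPolynomial (Fin n) ℚ) ^ i * qq (2 * l1 + 4 + i) * qq (2 * l2 + 2 - i)
      = 4 * ∑ s : Equiv.Perm (Fin 2) × Equiv.Perm (Fin 2),
          (((Equiv.Perm.sign s.1 : ℤ) * (Equiv.Perm.sign s.2 : ℤ) : ℤ) :
              MvPolynomial (Fin n) ℚ) *
            ∑ p ∈ Bset l1 l2 s.1 s.2,
              q (2 * p.1.1) * q (2 * p.1.2 + 1) * q (2 * p.2.1) * q (2 * p.2.2 + 1) := by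
  set F := PowerSeries.mk fun r : ℕ => q r
  set D := ∏ i : Fin n, (1 - C (MvPolynomial.X i : MvPolynomial (Fin n) ℚ) * X)
  have hD : IsUnit D := by
    rw [isUnit_iff_constantCoeff, map_prod]
    simp
  have hF : F * rescale (-1) F = 1 := by
    refine mul_rescale_neg_one_self_eq_one hD (hq.trans ?_)
    simp only [D, map_prod, rescale_neg_one_one_sub_C_mul_X]
  have hqq_sq : PowerSeries.mk (fun r => qq r) = F * F :=
    (hD.pow 2).mul_left_inj.1 (by rw [hqq, ← hq]; ring)
  have hq_even (k : ℕ) : q (2 * k) = coeff k (evenPart F) := by simp [F]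
  have hq_odd (k : ℕ) : q (2 * k + 1) = coeff k (oddPart F) := by simp [F]
  have hqq_eq : qq = fun m => coeff m (F * F) := funext fun m => by rw [← hqq_sq, coeff_mk]
  change twoRowQ qq (2 * l1 + 4) (2 * l2 + 2) = _
  rw [hqq_eq, twoRowQ_even_eq_sum (evenPart F) (oddPart F)
    (evenPart_mul_self_of_mul_rescale_neg_one_self_eq_one hF) _
    (fun m => by rw [← coeff_evenPart, evenPart_mul])
    (fun m => by rw [← coeff_oddPart, oddPart_mul])]
  simp_rw [hq_even, hq_odd]
  exact congrArg (4 * ·)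
    (sum_sign_mul_sum_Bset ![evenPart F, oddPart F] ![evenPart F, oddPart F] l1 l2).symm

/-- New expression of the two-row Schur `Q`-function `Q_{(2λ₁+4,2λ₂+2)}(x,x)` as a signed
sum of products of four single-variable `q`-coefficients over the sets `B(λ;σ₁,σ₂)`. -/
theorem Q_two_row_even_expression (n : ℕ) (hn : 1 ≤ n)
    (q : ℤ → MvPolynomial (Fin n) ℚ) (qq : ℕ → MvPolynomial (Fin n) ℚ)
    (hneg : ∀ r : ℤ, r < 0 → q r = 0)
    (hq : (PowerSeries.mk fun r : ℕ => q r) *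
        ∏ i : Fin n, (1 - PowerSeries.C (MvPolynomial.X i : MvPolynomial (Fin n) ℚ) *
          PowerSeries.X)
      = ∏ i : Fin n, (1 + PowerSeries.C (MvPolynomial.X i : MvPolynomial (Fin n) ℚ) *
          PowerSeries.X))
    (hqq : (PowerSeries.mk fun r => qq r) *
        (∏ i : Fin n, (1 - PowerSeries.C (MvPolynomial.X i : MvPolynomial (Fin n) ℚ) *
          PowerSeries.X)) ^ 2
      = (∏ i : Fin n, (1 + PowerSeries.C (MvPolynomial.X i : MvPolynomial (Fin n) ℚ) *
          PowerSeries.X)) ^ 2)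
    (l1 l2 : ℕ) (h : l2 ≤ l1) :
    qq (2 * l1 + 4) * qq (2 * l2 + 2) +
        2 * ∑ i ∈ Finset.Icc 1 (2 * l2 + 2),
          (-1 : MvPolynomial (Fin n) ℚ) ^ i * qq (2 * l1 + 4 + i) * qq (2 * l2 + 2 - i)
      = 4 * ∑ s : Equiv.Perm (Fin 2) × Equiv.Perm (Fin 2),
          (((Equiv.Perm.sign s.1 : ℤ) * (Equiv.Perm.sign s.2 : ℤ) : ℤ) :
              MvPolynomial (Fin n) ℚ) *
            ∑ p ∈ Bset l1 l2 s.1 s.2,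
              q (2 * p.1.1) * q (2 * p.1.2 + 1) * q (2 * p.2.1) * q (2 * p.2.2 + 1) :=
  Q_two_row_even_expression_general n q qq hq hqq l1 l2
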